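/- arXiv:1907.13402 — 8 statements merged into one kernel-verified Lean document; each statement's English description precedes it below -/
import Mathlib

section
/- Let X be a normed space and let B, B_n (n ∈ ℕ) be nonempty closed convex subsets of X such that B_n → B in the Attouch-Wets sense. Let f ∈ S_{X*} and x₀ ∈ S_X with f(x₀) = 1, and suppose 0 ∈ B ⊂ {x ∈ X : f(x) ≤ 0}. Then for each α ∈ (0,1) and each ε > 0 there exists n₀ ∈ ℕ such that B_n ⊂ V(f,α) + εx₀ for all n ≥ n₀, where V(f,α) = {x ∈ X : f(x) ≤ α‖x‖}. -/
open Filter Metric Topology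

/-- Attouch–Wets convergence of a sequence of sets. -/
def AWTendsto {X : Type*} [NormedAddCommGroup X] (A : ℕ → Set X) (L : Set X) : Prop :=
  ∀ N : ℕ, ∀ ε : ℝ, 0 < ε → ∃ n₀ : ℕ, ∀ n ≥ n₀, ∀ x : X, ‖x‖ ≤ (N : ℝ) →
    |Metric.infDist x (A n) - Metric.infDist x L| < ε

/-- The cone `V(f, α) = {x : f(x) ≤ α‖x‖}`. -/
def coneV {X : Type*} [NormedAddCommGroup X] [NormedSpace ℝ X]
    (f : X →L[ℝ] ℝ) (α : ℝ) : Set X :=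
  {x : X | f x ≤ α * ‖x‖}

theorem stmt9 {X : Type*} [NormedAddCommGroup X] [NormedSpace ℝ X]
    (B : Set X) (Bn : ℕ → Set X)
    (hBne : B.Nonempty) (hBc : IsClosed B) (hBv : Convex ℝ B)
    (hBn : ∀ n, (Bn n).Nonempty ∧ IsClosed (Bn n) ∧ Convex ℝ (Bn n))
    (hAW : AWTendsto Bn B)
    (f : X →L[ℝ] ℝ) (hf : ‖f‖ = 1) (x₀ : X) (hx₀ : ‖x₀‖ = 1) (hfx₀ : f x₀ = 1)
    (h0B : (0 : X) ∈ B) (hBf : B ⊆ {x : X | f x ≤ 0}) :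
    ∀ α ∈ Set.Ioo (0 : ℝ) 1, ∀ ε : ℝ, 0 < ε →
      ∃ n₀ : ℕ, ∀ n ≥ n₀, Bn n ⊆ (fun v => v + ε • x₀) '' coneV f α := by
  rintro α ⟨hα0, hα1⟩ ε hε
  set c : ℝ := ε * (1 - α) with hc
  have hc0 : 0 < c := mul_pos hε (by linarith)
  set δ : ℝ := min c 1 / 2 with hδdef
  have hδ0 : 0 < δ := by
    have : 0 < min c 1 := lt_min hc0 one_pos
    positivity
  have hδc : δ < c := by
    have h1 : min c 1 ≤ c := min_le_left _ _
    simp only [hδdef]; linarith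
  have hδ1 : δ ≤ 1 / 2 := by
    have h1 : min c 1 ≤ 1 := min_le_right _ _
    simp only [hδdef]; linarith
  set N : ℕ := ⌈(8 : ℝ) / α⌉₊ + 1 with hNdef
  have hN8 : (8 : ℝ) / α ≤ (N : ℝ) := by
    have h1 := Nat.le_ceil ((8 : ℝ) / α)
    have h2 : ((⌈(8 : ℝ) / α⌉₊ : ℝ)) ≤ (N : ℝ) := by
      simp only [hNdef]; push_cast; linarith
    linarith
  have hαN : (8 : ℝ) ≤ α * N := by
    rw [div_le_iff₀ hα0] at hN8; linarith [mul_comm α (N : ℝ)]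
  have hNbig : (8 : ℝ) ≤ (N : ℝ) := by
    have h1 : α * (N : ℝ) ≤ 1 * (N : ℝ) :=
      mul_le_mul_of_nonneg_right hα1.le (Nat.cast_nonneg N)
    linarith
  obtain ⟨n₀, hn₀⟩ := hAW N δ hδ0
  refine ⟨n₀, fun n hn x hx => ?_⟩
  obtain ⟨hne, hcl, hcv⟩ := hBn n
  -- Step A: points of Bn n in the N-ball have small f-value
  have stepA : ∀ y ∈ Bn n, ‖y‖ ≤ (N : ℝ) → f y < δ := by
    intro y hy hyN
    have h1 := hn₀ n hn y hyN
    have h2 : Metric.infDist y (Bn n) = 0 := Metric.infDist_zero_of_mem hy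
    have h3 : f y ≤ Metric.infDist y B := by
      by_contra hcon
      push_neg at hcon
      obtain ⟨b, hb, hbd⟩ := (Metric.infDist_lt_iff hBne).mp hcon
      have h4 : f (y - b) ≤ ‖f‖ * ‖y - b‖ :=
        le_trans (le_abs_self _) (f.le_opNorm _)
      have hb0 : f b ≤ 0 := hBf hb
      rw [map_sub, hf, one_mul] at h4
      rw [dist_eq_norm] at hbd
      linarith
    rw [h2] at h1
    have h5 := (abs_lt.mp h1).1
    linarith
  -- find a point of Bn n close to 0
  have h0 := hn₀ n hn 0 (by simp)
  have hB0 : Metric.infDist (0 : X) B = 0 := Metric.infDist_zero_of_mem h0B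
  rw [hB0, sub_zero] at h0
  have hlt : Metric.infDist (0 : X) (Bn n) < δ := lt_of_le_of_lt (le_abs_self _) h0
  obtain ⟨b, hbmem, hbd⟩ := (Metric.infDist_lt_iff hne).mp hlt
  have hbnorm : ‖b‖ < δ := by rwa [dist_zero_left] at hbd
  -- Step B: f x ≤ α‖x‖ + c
  have stepB : f x ≤ α * ‖x‖ + c := by
    by_contra h
    push_neg at h
    by_cases hxN : ‖x‖ ≤ (N : ℝ)
    · have h5 := stepA x hx hxN
      have h6 : 0 ≤ α * ‖x‖ := mul_nonneg hα0.le (norm_nonneg x)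
      linarith
    · push_neg at hxN
      have hxb : (N : ℝ) / 2 < ‖x - b‖ := by
        have := norm_sub_norm_le x b
        have hδN : δ ≤ (N : ℝ) / 2 := by linarith
        linarith
      have hxbpos : (0 : ℝ) < ‖x - b‖ := by linarith [hNbig]
      set t : ℝ := ((N : ℝ) / 2) / ‖x - b‖ with ht
      have ht0 : 0 < t := div_pos (by linarith) hxbpos
      have ht1 : t < 1 := (div_lt_one hxbpos).mpr hxb
      have htxb : t * ‖x - b‖ = (N : ℝ) / 2 :=
        div_mul_cancel₀ _ (ne_of_gt hxbpos)
      set y : X := b + t • (x - b) with hy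
      have hymem : y ∈ Bn n := by
        have hmem := hcv hbmem hx (by linarith : (0:ℝ) ≤ 1 - t) ht0.le (by ring)
        have heq : y = (1 - t) • b + t • x := by simp only [hy]; module
        rw [heq]; exact hmem
      have hynorm : ‖y‖ ≤ (N : ℝ) := by
        calc ‖y‖ ≤ ‖b‖ + ‖t • (x - b)‖ := norm_add_le _ _
          _ = ‖b‖ + t * ‖x - b‖ := by rw [norm_smul, Real.norm_of_nonneg ht0.le]
          _ = ‖b‖ + (N : ℝ) / 2 := by rw [htxb]
          _ ≤ (N : ℝ) := by linarith
      have hfy := stepA y hymem hynorm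
      have hfy2 : f y = (1 - t) * f b + t * f x := by
        have hyeq : y = (1 - t) • b + t • x := by simp only [hy]; module
        rw [hyeq, map_add, map_smul, map_smul, smul_eq_mul, smul_eq_mul]
      have hfb : -δ < f b := by
        have h4 : f (-b) ≤ ‖f‖ * ‖-b‖ := le_trans (le_abs_self _) (f.le_opNorm _)
        rw [map_neg, hf, one_mul, norm_neg] at h4
        linarith
      -- t * ‖x‖ ≥ N/2 - δ
      have e0 : ‖x - b‖ - δ ≤ ‖x‖ := by
        have h5 : ‖x - b‖ ≤ ‖x‖ + ‖b‖ := norm_sub_le x b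
        linarith
      have e1 : (N : ℝ) / 2 - δ ≤ t * ‖x‖ := by
        have h6 : t * (‖x - b‖ - δ) ≤ t * ‖x‖ := mul_le_mul_of_nonneg_left e0 ht0.le
        have h7 : t * δ ≤ 1 * δ := mul_le_mul_of_nonneg_right ht1.le hδ0.le
        have h8 : t * (‖x - b‖ - δ) = t * ‖x - b‖ - t * δ := by ring
        rw [h8, htxb] at h6
        linarith
      have e2 : α * ((N : ℝ) / 2 - δ) ≤ t * f x := by
        have h6 : t * (α * ‖x‖) ≤ t * f x := by
          have : α * ‖x‖ ≤ f x := by linarith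
          exact mul_le_mul_of_nonneg_left this ht0.le
        have h7 : α * ((N : ℝ) / 2 - δ) ≤ α * (t * ‖x‖) :=
          mul_le_mul_of_nonneg_left e1 hα0.le
        have h9 : α * (t * ‖x‖) = t * (α * ‖x‖) := by ring
        linarith
      have e3 : -δ ≤ (1 - t) * f b := by
        have h8 : (1 - t) * (-δ) ≤ (1 - t) * f b :=
          mul_le_mul_of_nonneg_left hfb.le (by linarith)
        have h9 : (1 - t) * δ ≤ 1 * δ :=
          mul_le_mul_of_nonneg_right (by linarith) hδ0.le
        have h10 : (1 - t) * (-δ) = -((1 - t) * δ) := by ring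
        linarith
      -- α*(N/2 - δ) ≥ 4 - αδ ≥ 4 - 1/2
      have e4 : (7/2 : ℝ) ≤ α * ((N : ℝ) / 2 - δ) := by
        have h11 : α * δ ≤ 1 * δ := mul_le_mul_of_nonneg_right hα1.le hδ0.le
        have h12 : α * ((N : ℝ) / 2 - δ) = α * (N : ℝ) / 2 - α * δ := by ring
        linarith
      rw [hfy2] at hfy
      linarith
  -- Step C: conclude
  refine ⟨x - ε • x₀, ?_, by simp⟩
  show f (x - ε • x₀) ≤ α * ‖x - ε • x₀‖
  have hfxe : f (x - ε • x₀) = f x - ε := by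
    rw [map_sub, map_smul, smul_eq_mul, hfx₀, mul_one]
  rw [hfxe]
  by_cases hxε : ‖x‖ ≤ ε
  · have h4 : f x ≤ ‖f‖ * ‖x‖ := le_trans (le_abs_self _) (f.le_opNorm _)
    rw [hf, one_mul] at h4
    have : 0 ≤ α * ‖x - ε • x₀‖ := mul_nonneg hα0.le (norm_nonneg _)
    linarith
  · push_neg at hxε
    have hnm : ‖x‖ - ε ≤ ‖x - ε • x₀‖ := by
      have := norm_sub_norm_le x (ε • x₀)
      rw [norm_smul, Real.norm_of_nonneg hε.le, hx₀, mul_one] at this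
      linarith
    have h13 : α * (‖x‖ - ε) ≤ α * ‖x - ε • x₀‖ := mul_le_mul_of_nonneg_left hnm hα0.le
    have h14 : α * (‖x‖ - ε) = α * ‖x‖ - α * ε := by ring
    have h15 : c = ε - ε * α := by rw [hc]; ring
    linarith
end

section
/- Let X be a normed space and let A, A_n (n ∈ ℕ) be nonempty closed convex subsets of X such that A_n → A in the Attouch-Wets sense. Let f ∈ S_{X*}, α ∈ (0,1), ε > 0, and x₀ ∈ S_X with f(x₀) = 1, and suppose 0 ∈ A ⊂ C(f,α) − εx₀, where C(f,α) = {x ∈ X : f(x) ≥ α‖x‖}. Then for each β ∈ (0,α) and each ε' > ε there exists n₀ ∈ ℕ such that A_n ⊂ C(f,β) − ε'x₀ for all n ≥ n₀. -/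
open Filter Metric Topology

/-- The convex cone `C(f, α) = {x : f(x) ≥ α‖x‖}`. -/
def coneC {X : Type*} [NormedAddCommGroup X] [NormedSpace ℝ X]
    (f : X →L[ℝ] ℝ) (α : ℝ) : Set X :=
  {x : X | α * ‖x‖ ≤ f x}

set_option maxHeartbeats 1000000 in
theorem stmt10 {X : Type*} [NormedAddCommGroup X] [NormedSpace ℝ X]
    (A : Set X) (An : ℕ → Set X)
    (hAne : A.Nonempty) (hAc : IsClosed A) (hAv : Convex ℝ A)
    (hAn : ∀ n, (An n).Nonempty ∧ IsClosed (An n) ∧ Convex ℝ (An n))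
    (hAW : AWTendsto An A)
    (f : X →L[ℝ] ℝ) (hf : ‖f‖ = 1) (α : ℝ) (hα : α ∈ Set.Ioo (0 : ℝ) 1)
    (ε : ℝ) (hε : 0 < ε)
    (x₀ : X) (hx₀ : ‖x₀‖ = 1) (hfx₀ : f x₀ = 1)
    (h0A : (0 : X) ∈ A) (hAsub : A ⊆ (fun c => c - ε • x₀) '' coneC f α) :
    ∀ β ∈ Set.Ioo (0 : ℝ) α, ∀ ε' : ℝ, ε < ε' →
      ∃ n₀ : ℕ, ∀ n ≥ n₀, An n ⊆ (fun c => c - ε' • x₀) '' coneC f β := by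
  obtain ⟨hα0, hα1⟩ := hα
  rintro β ⟨hβ0, hβα⟩ ε' hεε'
  have hβ1 : β < 1 := lt_trans hβα hα1
  have hε'0 : 0 < ε' := lt_trans hε hεε'
  obtain ⟨β', hβ'def⟩ : ∃ b : ℝ, b = (α + β) / 2 := ⟨_, rfl⟩
  obtain ⟨ε'', hε''def⟩ : ∃ e : ℝ, e = (ε + ε') / 2 := ⟨_, rfl⟩
  have hββ' : β < β' := by rw [hβ'def]; linarith
  have hβ'α : β' < α := by rw [hβ'def]; linarith
  have hβ'0 : 0 < β' := lt_trans hβ0 hββ'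
  have hεε'' : ε < ε'' := by rw [hε''def]; linarith
  have hε''ε' : ε'' < ε' := by rw [hε''def]; linarith
  have hε''0 : 0 < ε'' := lt_trans hε hεε''
  obtain ⟨δ, hδdef⟩ : ∃ d : ℝ, d = (1 - α) * (ε'' - ε) / (2 * (1 + α)) := ⟨_, rfl⟩
  have hδ0 : 0 < δ := by
    rw [hδdef]; exact div_pos (mul_pos (by linarith) (by linarith)) (by linarith)
  have hfnorm : ∀ z : X, |f z| ≤ ‖z‖ := by
    intro z
    have h := f.le_opNorm z
    rw [hf, one_mul] at h
    simpa [Real.norm_eq_abs] using h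
  -- key estimate for points δ-close to A
  have key : ∀ x : X, Metric.infDist x A < δ → β' * ‖x + ε'' • x₀‖ ≤ f x + ε'' := by
    intro x hx
    obtain ⟨a, haA, hda⟩ := (Metric.infDist_lt_iff hAne).mp hx
    obtain ⟨c, hc, hca⟩ := hAsub haA
    have hca' : c - ε • x₀ = a := hca
    have hc2 : α * ‖c‖ ≤ f c := hc
    have hc' : c = a + ε • x₀ := by rw [← hca']; abel
    have h1 : α * ‖a + ε • x₀‖ ≤ f a + ε := by
      have hfc : f c = f a + ε := by rw [hc']; simp [hfx₀]
      rw [← hc', ← hfc]; exact hc2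
    have h2 : f a - f x ≤ δ := by
      have h := hfnorm (a - x)
      have heq : f a - f x = f (a - x) := by simp
      rw [heq]
      calc f (a - x) ≤ |f (a - x)| := le_abs_self _
        _ ≤ ‖a - x‖ := h
        _ ≤ δ := by
            rw [← dist_eq_norm, dist_comm]
            exact hda.le
    have h3 : ‖x + ε • x₀‖ ≤ ‖a + ε • x₀‖ + δ := by
      have hxa : ‖x - a‖ ≤ δ := by rw [← dist_eq_norm]; exact hda.le
      calc ‖x + ε • x₀‖ = ‖(a + ε • x₀) + (x - a)‖ := by congr 1; abel
        _ ≤ ‖a + ε • x₀‖ + ‖x - a‖ := norm_add_le _ _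
        _ ≤ ‖a + ε • x₀‖ + δ := by linarith
    have h4 : ‖x + ε'' • x₀‖ ≤ ‖x + ε • x₀‖ + (ε'' - ε) := by
      calc ‖x + ε'' • x₀‖ = ‖(x + ε • x₀) + (ε'' - ε) • x₀‖ := by
            congr 1; rw [sub_smul]; abel
        _ ≤ ‖x + ε • x₀‖ + ‖(ε'' - ε) • x₀‖ := norm_add_le _ _
        _ = ‖x + ε • x₀‖ + (ε'' - ε) := by
            rw [norm_smul, hx₀, mul_one, Real.norm_eq_abs, abs_of_pos (by linarith)]
    have hδeq : 2 * (1 + α) * δ = (1 - α) * (ε'' - ε) := by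
      rw [hδdef]; field_simp
    nlinarith [mul_le_mul_of_nonneg_left h3 hα0.le, mul_le_mul_of_nonneg_left h4 hα0.le,
      mul_nonneg (sub_pos.mpr hβ'α).le (norm_nonneg (x + ε'' • x₀)),
      norm_nonneg (x + ε'' • x₀), norm_nonneg (x + ε • x₀), norm_nonneg (a + ε • x₀)]
  -- membership helper
  have memTarget : ∀ x : X, β * ‖x + ε' • x₀‖ ≤ f x + ε' →
      x ∈ (fun c => c - ε' • x₀) '' coneC f β := by
    intro x hx
    refine ⟨x + ε' • x₀, ?_, by simp⟩
    show β * ‖x + ε' • x₀‖ ≤ f (x + ε' • x₀)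
    simpa [hfx₀] using hx
  -- near points satisfy the (β, ε') condition
  have near : ∀ x : X, Metric.infDist x A < δ → β * ‖x + ε' • x₀‖ ≤ f x + ε' := by
    intro x hx
    have hkey := key x hx
    have h4 : ‖x + ε' • x₀‖ ≤ ‖x + ε'' • x₀‖ + (ε' - ε'') := by
      calc ‖x + ε' • x₀‖ = ‖(x + ε'' • x₀) + (ε' - ε'') • x₀‖ := by
            congr 1; rw [sub_smul]; abel
        _ ≤ ‖x + ε'' • x₀‖ + ‖(ε' - ε'') • x₀‖ := norm_add_le _ _
        _ = ‖x + ε'' • x₀‖ + (ε' - ε'') := by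
            rw [norm_smul, hx₀, mul_one, Real.norm_eq_abs, abs_of_pos (by linarith)]
    nlinarith [mul_le_mul_of_nonneg_left h4 hβ0.le,
      mul_nonneg (sub_pos.mpr hββ').le (norm_nonneg (x + ε'' • x₀))]
  obtain ⟨N, hN⟩ := exists_nat_ge (2 * (δ + ε'') + 2 * ((2 * δ + ε' + 2 * ε'') / (β' - β)) + 1)
  have hdivpos : (0:ℝ) ≤ 2 * ((2 * δ + ε' + 2 * ε'') / (β' - β)) := by
    have h := div_nonneg (show (0:ℝ) ≤ 2 * δ + ε' + 2 * ε'' by linarith)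
      (show (0:ℝ) ≤ β' - β by linarith)
    linarith
  obtain ⟨n₀, hn₀⟩ := hAW N δ hδ0
  refine ⟨n₀, fun n hn x hx => ?_⟩
  by_cases hxN : ‖x‖ ≤ (N : ℝ)
  · have h := hn₀ n hn x hxN
    rw [Metric.infDist_zero_of_mem hx, zero_sub, abs_neg,
      abs_of_nonneg Metric.infDist_nonneg] at h
    exact memTarget x (near x h)
  · push_neg at hxN
    have hN1 : (1:ℝ) ≤ (N:ℝ) := by
      have h1 : (0:ℝ) ≤ 2 * (δ + ε'') := by positivity
      linarith
    have hxpos : 0 < ‖x‖ := by linarith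
    have hAn0 : Metric.infDist (0:X) (An n) < δ := by
      have h := hn₀ n hn 0 (by simpa using (by linarith : (0:ℝ) ≤ (N:ℝ)))
      rw [Metric.infDist_zero_of_mem h0A, sub_zero,
        abs_of_nonneg Metric.infDist_nonneg] at h
      exact h
    obtain ⟨a, haAn, hda⟩ := (Metric.infDist_lt_iff (hAn n).1).mp hAn0
    have hanorm : ‖a‖ < δ := by rwa [dist_zero_left] at hda
    obtain ⟨t, htdef⟩ : ∃ s : ℝ, s = (N:ℝ) / (2 * ‖x‖) := ⟨_, rfl⟩
    have ht0 : 0 < t := by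
      rw [htdef]; exact div_pos (by linarith) (by linarith)
    have ht1 : t < 1 := by
      rw [htdef, div_lt_one (by linarith)]
      linarith
    have htx : t * ‖x‖ = (N:ℝ) / 2 := by
      rw [htdef]; field_simp
    obtain ⟨y, hydef⟩ : ∃ z : X, z = t • x + (1 - t) • a := ⟨_, rfl⟩
    have hyAn : y ∈ An n := by
      rw [hydef]; exact (hAn n).2.2 hx haAn ht0.le (by linarith) (by ring)
    have hδN : δ ≤ (N:ℝ) / 2 := by linarith
    have hynorm : ‖y‖ ≤ (N:ℝ) / 2 + δ := by
      rw [hydef]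
      calc ‖t • x + (1 - t) • a‖ ≤ ‖t • x‖ + ‖(1 - t) • a‖ := norm_add_le _ _
        _ = t * ‖x‖ + (1 - t) * ‖a‖ := by
            rw [norm_smul, norm_smul, Real.norm_eq_abs, Real.norm_eq_abs,
              abs_of_pos ht0, abs_of_pos (by linarith)]
        _ ≤ (N:ℝ) / 2 + δ := by
            rw [htx]
            nlinarith [norm_nonneg a]
    have hyN : ‖y‖ ≤ (N:ℝ) := by linarith
    have hyA : Metric.infDist y A < δ := by
      have h := hn₀ n hn y hyN
      rw [Metric.infDist_zero_of_mem hyAn, zero_sub, abs_neg,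
        abs_of_nonneg Metric.infDist_nonneg] at h
      exact h
    have hkey := key y hyA
    have hfy : f y = t * f x + (1 - t) * f a := by rw [hydef]; simp
    have hfa : |f a| ≤ δ := (hfnorm a).trans hanorm.le
    have h5 : (1 - t) * f a ≤ δ := by
      obtain ⟨hl, hr⟩ := abs_le.mp hfa
      nlinarith
    have h1ta : ‖(1 - t) • a‖ ≤ δ := by
      rw [norm_smul, Real.norm_eq_abs, abs_of_pos (by linarith)]
      nlinarith [norm_nonneg a]
    have hylow : (N:ℝ) / 2 - δ ≤ ‖y‖ := by
      have heq : t • x = y - (1 - t) • a := by rw [hydef]; abel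
      have h := norm_sub_le y ((1 - t) • a)
      rw [← heq] at h
      rw [norm_smul, Real.norm_eq_abs, abs_of_pos ht0, htx] at h
      linarith
    have hyx₀ : ‖y‖ - ε'' ≤ ‖y + ε'' • x₀‖ := by
      have h := norm_sub_norm_le y (-(ε'' • x₀))
      rw [sub_neg_eq_add, norm_neg, norm_smul, Real.norm_eq_abs,
        abs_of_pos hε''0, hx₀, mul_one] at h
      exact h
    have hupper : t * ‖x + ε' • x₀‖ ≤ ‖y + ε'' • x₀‖ + δ + (ε' + ε'') := by
      have heq : t • (x + ε' • x₀) = (y + ε'' • x₀) - (1 - t) • a + (t * ε' - ε'') • x₀ := by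
        rw [hydef]; module
      have h2 : ‖(t * ε' - ε'') • x₀‖ ≤ ε' + ε'' := by
        rw [norm_smul, hx₀, mul_one, Real.norm_eq_abs, abs_le]
        constructor <;> nlinarith
      calc t * ‖x + ε' • x₀‖ = ‖t • (x + ε' • x₀)‖ := by
            rw [norm_smul, Real.norm_eq_abs, abs_of_pos ht0]
        _ = ‖(y + ε'' • x₀) - (1 - t) • a + (t * ε' - ε'') • x₀‖ := by rw [heq]
        _ ≤ ‖(y + ε'' • x₀) - (1 - t) • a‖ + ‖(t * ε' - ε'') • x₀‖ := norm_add_le _ _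
        _ ≤ (‖y + ε'' • x₀‖ + ‖(1 - t) • a‖) + ‖(t * ε' - ε'') • x₀‖ := by
            gcongr; exact norm_sub_le _ _
        _ ≤ ‖y + ε'' • x₀‖ + δ + (ε' + ε'') := by linarith
    have hNbig : 2 * δ + ε' + 2 * ε'' ≤ (β' - β) * ((N:ℝ) / 2 - δ - ε'') := by
      have hdiv : (β' - β) * ((2 * δ + ε' + 2 * ε'') / (β' - β)) = 2 * δ + ε' + 2 * ε'' := by
        rw [mul_comm]
        exact div_mul_cancel₀ _ (ne_of_gt (sub_pos.mpr hββ'))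
      have hstep : (2 * δ + ε' + 2 * ε'') / (β' - β) ≤ (N:ℝ) / 2 - δ - ε'' := by linarith
      have h := mul_le_mul_of_nonneg_left hstep (sub_pos.mpr hββ').le
      rw [hdiv] at h
      exact h
    have hW : 2 * δ + ε' + 2 * ε'' ≤ (β' - β) * ‖y + ε'' • x₀‖ := by
      have h6 : (N:ℝ) / 2 - δ - ε'' ≤ ‖y + ε'' • x₀‖ := by linarith
      have h := mul_le_mul_of_nonneg_left h6 (sub_pos.mpr hββ').le
      linarith
    have H : t * (β * ‖x + ε' • x₀‖) ≤ t * (f x + ε') := by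
      have hbu := mul_le_mul_of_nonneg_left hupper hβ0.le
      nlinarith [mul_nonneg ht0.le hε'0.le,
        mul_nonneg (by linarith : (0:ℝ) ≤ 1 - β) (by positivity : (0:ℝ) ≤ δ + ε' + ε'')]
    exact memTarget x (le_of_mul_le_mul_left H ht0)
end

section
/- Let X be a real Hilbert space, x₀ ∈ S_X, and for θ ∈ (0, π/2) define C(θ) = {x ∈ X \ {0} : cos(x, x₀) ≥ sin θ} ∪ {0} and V(θ) = {x ∈ X \ {0} : cos(x, x₀) ≤ sin θ} ∪ {0}, where cos(u,v) = ⟨u,v⟩/(‖u‖‖v‖). Suppose θ₁, θ₂ ∈ (0, π/2) with θ₁ < θ₂. If x ∈ C(θ₂) \ {0} and y ∈ V(θ₁) \ {0}, then cos(x, y) ≤ cos(θ₂ − θ₁). -/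
open Filter Metric Topology
open scoped RealInnerProductSpace

theorem stmt11 {X : Type*} [NormedAddCommGroup X] [InnerProductSpace ℝ X]
    (x₀ : X) (hx₀ : ‖x₀‖ = 1) (θ₁ θ₂ : ℝ)
    (h1 : θ₁ ∈ Set.Ioo (0 : ℝ) (Real.pi / 2)) (h2 : θ₂ ∈ Set.Ioo (0 : ℝ) (Real.pi / 2))
    (h12 : θ₁ < θ₂)
    (x y : X) (hx : x ≠ 0) (hy : y ≠ 0)
    (hxC : Real.sin θ₂ ≤ ⟪x, x₀⟫ / (‖x‖ * ‖x₀‖))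
    (hyV : ⟪y, x₀⟫ / (‖y‖ * ‖x₀‖) ≤ Real.sin θ₁) :
    ⟪x, y⟫ / (‖x‖ * ‖y‖) ≤ Real.cos (θ₂ - θ₁) := by
  have hpi := Real.pi_pos
  set u : X := ‖x‖⁻¹ • x with hu
  set v : X := ‖y‖⁻¹ • y with hv
  have hxn : ‖x‖ ≠ 0 := norm_ne_zero_iff.mpr hx
  have hyn : ‖y‖ ≠ 0 := norm_ne_zero_iff.mpr hy
  have hun : ‖u‖ = 1 := norm_smul_inv_norm hx
  have hvn : ‖v‖ = 1 := norm_smul_inv_norm hy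
  set a : ℝ := ⟪u, x₀⟫ with hadef
  set b : ℝ := ⟪v, x₀⟫ with hbdef
  have hxx0 : ⟪x, x₀⟫ / (‖x‖ * ‖x₀‖) = a := by
    rw [hadef, hu, real_inner_smul_left, hx₀]
    field_simp
  have hyx0 : ⟪y, x₀⟫ / (‖y‖ * ‖x₀‖) = b := by
    rw [hbdef, hv, real_inner_smul_left, hx₀]
    field_simp
  have hxyuv : ⟪x, y⟫ / (‖x‖ * ‖y‖) = ⟪u, v⟫ := by
    rw [hu, hv, real_inner_smul_left, real_inner_smul_right]
    field_simp
  rw [hxyuv]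
  rw [hxx0] at hxC
  rw [hyx0] at hyV
  have ha1 : |a| ≤ 1 := by
    have := abs_real_inner_le_norm u x₀
    rwa [hun, hx₀, one_mul] at this
  have hb1 : |b| ≤ 1 := by
    have := abs_real_inner_le_norm v x₀
    rwa [hvn, hx₀, one_mul] at this
  have ha1' : -1 ≤ a ∧ a ≤ 1 := abs_le.mp ha1
  have hb1' : -1 ≤ b ∧ b ≤ 1 := abs_le.mp hb1
  have hx0sq : ⟪x₀, x₀⟫ = (1 : ℝ) := by
    rw [real_inner_self_eq_norm_sq, hx₀]; norm_num
  have husq : ⟪u, u⟫ = (1 : ℝ) := by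
    rw [real_inner_self_eq_norm_sq, hun]; norm_num
  have hvsq : ⟪v, v⟫ = (1 : ℝ) := by
    rw [real_inner_self_eq_norm_sq, hvn]; norm_num
  have hcomma : ⟪x₀, u⟫ = a := (real_inner_comm x₀ u).symm
  have hcommb : ⟪x₀, v⟫ = b := (real_inner_comm x₀ v).symm
  -- orthogonal decomposition
  set u' : X := u - a • x₀ with hu'
  set v' : X := v - b • x₀ with hv'
  have hu'norm : ‖u'‖ = Real.sqrt (1 - a ^ 2) := by
    rw [← Real.sqrt_sq (norm_nonneg u')]
    congr 1
    have : ‖u'‖ ^ 2 = ⟪u', u'⟫ := (real_inner_self_eq_norm_sq u').symm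
    rw [this, hu']
    simp only [inner_sub_left, inner_sub_right, real_inner_smul_left, real_inner_smul_right,
      husq, hx0sq, ← hadef, hcomma]
    ring
  have hv'norm : ‖v'‖ = Real.sqrt (1 - b ^ 2) := by
    rw [← Real.sqrt_sq (norm_nonneg v')]
    congr 1
    have : ‖v'‖ ^ 2 = ⟪v', v'⟫ := (real_inner_self_eq_norm_sq v').symm
    rw [this, hv']
    simp only [inner_sub_left, inner_sub_right, real_inner_smul_left, real_inner_smul_right,
      hvsq, hx0sq, ← hbdef, hcommb]
    ring
  have hinner' : ⟪u', v'⟫ = ⟪u, v⟫ - a * b := by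
    rw [hu', hv']
    simp only [inner_sub_left, inner_sub_right, real_inner_smul_left, real_inner_smul_right,
      hx0sq, ← hadef, ← hbdef, hcomma, hcommb]
    ring
  have hCS : ⟪u', v'⟫ ≤ ‖u'‖ * ‖v'‖ := real_inner_le_norm u' v'
  have key : ⟪u, v⟫ ≤ a * b + Real.sqrt (1 - a ^ 2) * Real.sqrt (1 - b ^ 2) := by
    rw [hu'norm, hv'norm, hinner'] at hCS
    linarith
  -- angles
  set α : ℝ := Real.arccos a with hα
  set β : ℝ := Real.arccos b with hβ
  have hcosβα : Real.cos (β - α) = a * b + Real.sqrt (1 - a ^ 2) * Real.sqrt (1 - b ^ 2) := by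
    rw [Real.cos_sub, hα, hβ, Real.cos_arccos ha1'.1 ha1'.2, Real.cos_arccos hb1'.1 hb1'.2,
      Real.sin_arccos, Real.sin_arccos]
    ring
  have hαle : α ≤ Real.pi / 2 - θ₂ := by
    rw [hα, Real.arccos_eq_pi_div_two_sub_arcsin]
    have : θ₂ ≤ Real.arcsin a := by
      have := Real.monotone_arcsin hxC
      rwa [Real.arcsin_sin (by linarith [h2.1]) (by linarith [h2.2])] at this
    linarith
  have hβge : Real.pi / 2 - θ₁ ≤ β := by
    rw [hβ, Real.arccos_eq_pi_div_two_sub_arcsin]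
    have : Real.arcsin b ≤ θ₁ := by
      have := Real.monotone_arcsin hyV
      rwa [Real.arcsin_sin (by linarith [h1.1]) (by linarith [h1.2])] at this
    linarith
  have hfin : Real.cos (β - α) ≤ Real.cos (θ₂ - θ₁) := by
    apply Real.cos_le_cos_of_nonneg_of_le_pi
    · linarith
    · have := Real.arccos_le_pi b
      have := Real.arccos_nonneg a
      rw [← hβ, ← hα] at *
      linarith [Real.arccos_le_pi b, Real.arccos_nonneg a]
    · linarith
  linarith [hcosβα ▸ hfin, key]
end

section
/- Let X be a real Hilbert space and ε, K > 0. Then there exists a constant μ > 0 (one may take μ = K/ε) such that for every closed convex subset C of X containing the ball εB_X and every x ∈ KB_X, one has ‖x − P_C x‖ ≤ μ(‖x‖ − ‖P_C x‖), where P_C denotes the metric projection onto C. -/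
/-!
Write `d = ‖x - p‖`. If `C ⊇ ε B_X`, then `C` contains `(ε / d) • (x - p)`, and the variational
inequality `⟪x - p, w - p⟫ ≤ 0` characterising `p = P_C x` at this `w` gives
`ε d ≤ ⟪x - p, p⟫ ≤ ‖p‖ (‖x‖ - ‖p‖) ≤ K (‖x‖ - ‖p‖)`, using `‖p‖ ≤ ‖x‖ ≤ K` in the last step.
-/

open Filter Metric Topology
open scoped RealInnerProductSpace

/-- `p` is a metric projection (nearest point) of `x` onto `K`. -/
def IsProjOn {X : Type*} [NormedAddCommGroup X] (K : Set X) (x p : X) : Prop :=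
  p ∈ K ∧ ∀ y ∈ K, dist x p ≤ dist x y

namespace IsProjOn

variable {X : Type*} [NormedAddCommGroup X] {C : Set X} {x p : X}

theorem norm_sub_eq_iInf (h : IsProjOn C x p) : ‖x - p‖ = ⨅ w : C, ‖x - w‖ := by
  have : Nonempty C := ⟨⟨p, h.1⟩⟩
  refine le_antisymm (le_ciInf fun w => ?_) (ciInf_le ?_ (⟨p, h.1⟩ : C))
  · simpa only [dist_eq_norm] using h.2 w w.2
  · exact ⟨0, Set.forall_mem_range.2 fun _ => norm_nonneg _⟩

variable [InnerProductSpace ℝ X]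

theorem inner_sub_sub_nonpos (hC : Convex ℝ C) (h : IsProjOn C x p) {w : X} (hw : w ∈ C) :
    ⟪x - p, w - p⟫ ≤ 0 :=
  (norm_eq_iInf_iff_real_inner_le_zero hC h.1).mp h.norm_sub_eq_iInf w hw

theorem norm_le (hC : Convex ℝ C) (h0 : (0 : X) ∈ C) (h : IsProjOn C x p) : ‖p‖ ≤ ‖x‖ := by
  have hVI := h.inner_sub_sub_nonpos hC h0
  rw [zero_sub, inner_neg_right, inner_sub_left, real_inner_self_eq_norm_sq] at hVI
  have hCS := real_inner_le_norm x p
  rcases (norm_nonneg p).eq_or_lt with hp | hp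
  · rw [← hp]
    exact norm_nonneg x
  · nlinarith

theorem mul_norm_sub_le_inner (hC : Convex ℝ C) {ε : ℝ} (hε : 0 ≤ ε)
    (hball : closedBall (0 : X) ε ⊆ C) (h : IsProjOn C x p) :
    ε * ‖x - p‖ ≤ ⟪x - p, p⟫ := by
  rcases eq_or_ne x p with rfl | hxp
  · simp
  have hd : 0 < ‖x - p‖ := norm_pos_iff.mpr (sub_ne_zero.mpr hxp)
  have hmem : (ε / ‖x - p‖) • (x - p) ∈ C := hball <| by
    rw [mem_closedBall, dist_zero_right, norm_smul, Real.norm_of_nonneg (by positivity),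
      div_mul_cancel₀ _ hd.ne']
  have hVI := h.inner_sub_sub_nonpos hC hmem
  rw [inner_sub_right, inner_smul_right, real_inner_self_eq_norm_sq, div_mul_eq_mul_div,
    pow_two, ← mul_assoc, mul_div_cancel_right₀ _ hd.ne'] at hVI
  linarith

theorem norm_sub_le_mul_norm_sub_norm (hC : Convex ℝ C) {ε K : ℝ} (hε : 0 < ε)
    (hball : closedBall (0 : X) ε ⊆ C) (hxK : ‖x‖ ≤ K) (h : IsProjOn C x p) :
    ‖x - p‖ ≤ K / ε * (‖x‖ - ‖p‖) := by
  have hp : ‖p‖ ≤ ‖x‖ := h.norm_le hC (hball (mem_closedBall_self hε.le))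
  rw [div_mul_eq_mul_div, le_div_iff₀ hε, mul_comm]
  calc
    ε * ‖x - p‖ ≤ ⟪x - p, p⟫ := h.mul_norm_sub_le_inner hC hε.le hball
    _ = ⟪x, p⟫ - ‖p‖ ^ 2 := by rw [inner_sub_left, real_inner_self_eq_norm_sq]
    _ ≤ ‖x‖ * ‖p‖ - ‖p‖ ^ 2 := by linarith [real_inner_le_norm x p]
    _ = ‖p‖ * (‖x‖ - ‖p‖) := by ring
    _ ≤ K * (‖x‖ - ‖p‖) :=
      mul_le_mul_of_nonneg_right (hp.trans hxK) (sub_nonneg.2 hp)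

end IsProjOn

theorem stmt12_general {X : Type*} [NormedAddCommGroup X] [InnerProductSpace ℝ X]
    (ε K : ℝ) (hε : 0 < ε) (hK : 0 < K) :
    ∃ μ : ℝ, 0 < μ ∧ ∀ C : Set X, IsClosed C → Convex ℝ C →
      Metric.closedBall (0 : X) ε ⊆ C → ∀ x : X, ‖x‖ ≤ K → ∀ p : X, IsProjOn C x p →
        ‖x - p‖ ≤ μ * (‖x‖ - ‖p‖) :=
  ⟨K / ε, div_pos hK hε, fun _ _ hC hball _ hxK _ h =>
    h.norm_sub_le_mul_norm_sub_norm hC hε hball hxK⟩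

theorem stmt12 {X : Type*} [NormedAddCommGroup X] [InnerProductSpace ℝ X] [CompleteSpace X]
    (ε K : ℝ) (hε : 0 < ε) (hK : 0 < K) :
    ∃ μ : ℝ, 0 < μ ∧ ∀ C : Set X, IsClosed C → Convex ℝ C →
      Metric.closedBall (0 : X) ε ⊆ C → ∀ x : X, ‖x‖ ≤ K → ∀ p : X, IsProjOn C x p →
        ‖x - p‖ ≤ μ * (‖x‖ - ‖p‖) :=
  stmt12_general ε K hε hK
end

section
/- Let X be a real Hilbert space, U a linear subspace of X, and {A_n} a sequence of nonempty closed convex subsets of X such that A_n → U (the closure of U) in the Attouch-Wets sense. Then for each ε ∈ (0,1) there exists n₀ ∈ ℕ such that A_n ⊆ U(ε) for all n ≥ n₀, where U(ε) = {w ∈ X \ {0} : ∃ u ∈ U \ {0} with cos(u, w) ≥ 1 − ε} ∪ εB_X. -/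
open Filter Metric Topology
open scoped RealInnerProductSpace

/-- For a set `W` and `ε ∈ (0,1)`, the set
`W(ε) = {w ≠ 0 : ∃ u ∈ W \ {0}, cos(u,w) ≥ 1 − ε} ∪ εB_X`. -/
def coneNbhd {X : Type*} [NormedAddCommGroup X] [InnerProductSpace ℝ X]
    (W : Set X) (ε : ℝ) : Set X :=
  {w : X | w ≠ 0 ∧ ∃ u ∈ W, u ≠ 0 ∧ 1 - ε ≤ ⟪u, w⟫ / (‖u‖ * ‖w‖)} ∪
    Metric.closedBall 0 ε

lemma cos_aux {X : Type*} [NormedAddCommGroup X] [InnerProductSpace ℝ X]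
    (u s : X) (η m : ℝ) (hm : 0 < m) (hms : m ≤ ‖s‖) (hus : ‖u - s‖ ≤ η)
    (hηm : η < m) : u ≠ 0 ∧ 1 - 2*η/m ≤ ⟪u, s⟫ / (‖u‖ * ‖s‖) := by
  have hη0 : 0 ≤ η := le_trans (norm_nonneg _) hus
  have ha : 0 < ‖s‖ := lt_of_lt_of_le hm hms
  have h1 : ‖s‖ - ‖u‖ ≤ η := by
    have h := norm_sub_norm_le s u
    rw [norm_sub_rev] at h
    linarith
  have h2 : ‖u‖ - ‖s‖ ≤ η := by
    have h := norm_sub_norm_le u s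
    linarith
  have hu0 : 0 < ‖u‖ := by linarith
  have hin : ‖s‖ * ‖s‖ - η * ‖s‖ ≤ ⟪u, s⟫ := by
    have hd : ⟪u, s⟫ - ⟪s, s⟫ = ⟪u - s, s⟫ := by rw [inner_sub_left]
    have habs : |⟪u - s, s⟫| ≤ ‖u - s‖ * ‖s‖ := abs_real_inner_le_norm _ _
    have hss : ⟪s, s⟫ = ‖s‖ * ‖s‖ := real_inner_self_eq_norm_mul_norm s
    have h3 : ‖u - s‖ * ‖s‖ ≤ η * ‖s‖ := by nlinarith
    have h4 := abs_le.mp habs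
    nlinarith [h4.1]
  refine ⟨fun h => by simp [h] at hu0, ?_⟩
  rw [le_div_iff₀ (by positivity)]
  rcases le_or_gt (1 - 2*η/m) 0 with hc | hc
  · have hcpos : 0 ≤ ⟪u, s⟫ := by nlinarith
    nlinarith [mul_pos hu0 ha]
  · have hb : ‖u‖ ≤ ‖s‖ + η := by linarith
    have hrm : 2*η ≤ (2*η/m) * (‖s‖ + η) := by
      rw [div_mul_eq_mul_div, le_div_iff₀ hm]; nlinarith
    have h5 : ‖u‖ * ‖s‖ ≤ (‖s‖ + η) * ‖s‖ := mul_le_mul_of_nonneg_right hb ha.le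
    have h6 : (2*η) * ‖s‖ ≤ ((2*η/m) * (‖s‖ + η)) * ‖s‖ := mul_le_mul_of_nonneg_right hrm ha.le
    nlinarith [mul_le_mul_of_nonneg_left h5 hc.le]

theorem stmt13 {X : Type*} [NormedAddCommGroup X] [InnerProductSpace ℝ X]
    (U : Submodule ℝ X) (An : ℕ → Set X)
    (hAn : ∀ n, (An n).Nonempty ∧ IsClosed (An n) ∧ Convex ℝ (An n))
    (hAW : AWTendsto An (closure (U : Set X))) :
    ∀ ε ∈ Set.Ioo (0 : ℝ) 1, ∃ n₀ : ℕ, ∀ n ≥ n₀, An n ⊆ coneNbhd (U : Set X) ε := by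
  rintro ε ⟨hε0, hε1⟩
  set δ : ℝ := ε^2/16 with hδdef
  have hδ : 0 < δ := by positivity
  have hδsmall : δ < 1/16 := by nlinarith
  obtain ⟨n₀, hn₀⟩ := hAW 1 δ hδ
  have hUne : ((U : Set X)).Nonempty := ⟨0, U.zero_mem⟩
  refine ⟨n₀, fun n hn w hw => ?_⟩
  obtain ⟨hne, hcl, hconv⟩ := hAn n
  -- key: any point of An n of norm ≤ 1 has a point of U within δ
  have hkey : ∀ z ∈ An n, ‖z‖ ≤ 1 → ∃ u ∈ (U : Set X), ‖u - z‖ < δ := by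
    intro z hzA hz1
    have h := hn₀ n hn z (by exact_mod_cast hz1)
    rw [Metric.infDist_zero_of_mem hzA, Metric.infDist_closure] at h
    have h' : Metric.infDist z (U : Set X) < δ := by
      have := abs_nonneg (Metric.infDist z (U : Set X))
      rw [zero_sub, abs_neg, abs_of_nonneg Metric.infDist_nonneg] at h
      exact h
    obtain ⟨u, huU, hd⟩ := (Metric.infDist_lt_iff hUne).mp h'
    refine ⟨u, huU, ?_⟩
    rw [dist_eq_norm, norm_sub_rev] at hd
    exact hd
  by_cases hwε : ‖w‖ ≤ ε
  · exact Or.inr (mem_closedBall_zero_iff.mpr hwε)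
  push_neg at hwε
  have hw0 : w ≠ 0 := by
    intro h; rw [h, norm_zero] at hwε; linarith
  by_cases hw1 : ‖w‖ ≤ 1
  · -- w itself is near U
    obtain ⟨u, huU, hd⟩ := hkey w hw hw1
    have hδε : δ < ε := by nlinarith
    obtain ⟨hu0, hcos⟩ := cos_aux u w δ ε hε0 hwε.le hd.le hδε
    refine Or.inl ⟨hw0, u, huU, hu0, le_trans ?_ hcos⟩
    have : 2*δ/ε ≤ ε := by
      rw [div_le_iff₀ hε0]; nlinarith
    linarith
  · -- use the segment from a near-zero point a ∈ An n to w
    push_neg at hw1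
    -- a point a ∈ An n with ‖a‖ < δ
    have h0 := hn₀ n hn 0 (by simp)
    rw [Metric.infDist_closure, Metric.infDist_zero_of_mem U.zero_mem, sub_zero,
      abs_of_nonneg Metric.infDist_nonneg] at h0
    obtain ⟨a, haA, hda⟩ := (Metric.infDist_lt_iff hne).mp h0
    rw [dist_comm, dist_zero_right] at hda
    -- IVT to find point of norm 3/4 on the segment
    have hf : Continuous fun t : ℝ => ‖(1 - t) • a + t • w‖ := by continuity
    have hIVT := intermediate_value_Icc (zero_le_one) hf.continuousOn
    have h34 : (3/4 : ℝ) ∈ Set.Icc (‖(1-(0:ℝ)) • a + (0:ℝ) • w‖) (‖(1-(1:ℝ)) • a + (1:ℝ) • w‖) := by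
      simp only [sub_zero, one_smul, zero_smul, add_zero, sub_self, zero_add]
      constructor <;> [linarith; linarith]
    obtain ⟨t, htI, hft⟩ := hIVT h34
    obtain ⟨ht0, ht1⟩ := htI
    set z : X := (1 - t) • a + t • w with hzdef
    have hft' : ‖z‖ = 3/4 := hft
    have hzA : z ∈ An n := hconv haA hw (by linarith) ht0 (by ring)
    obtain ⟨u, huU, hd⟩ := hkey z hzA (by rw [hft']; norm_num)
    have htpos : 0 < t := by
      rcases ht0.lt_or_eq with h | h
      · exact h
      · exfalso
        have hza : z = a := by rw [hzdef, ← h]; simp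
        rw [hza] at hft'; linarith
    -- s := t • w
    have hzs : ‖z - t • w‖ < δ := by
      have : z - t • w = (1 - t) • a := by rw [hzdef]; abel
      rw [this, norm_smul, Real.norm_eq_abs, abs_of_nonneg (by linarith)]
      nlinarith [norm_nonneg a]
    have hus : ‖u - t • w‖ < 2*δ := by
      calc ‖u - t • w‖ ≤ ‖u - z‖ + ‖z - t • w‖ := by
            have : u - t • w = (u - z) + (z - t • w) := by abel
            rw [this]; exact norm_add_le _ _
        _ < 2*δ := by linarith
    have hsn : (1/2 : ℝ) ≤ ‖t • w‖ := by
      have h1 : ‖z‖ - ‖t • w‖ ≤ ‖z - t • w‖ := norm_sub_norm_le _ _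
      rw [hft'] at h1
      linarith
    obtain ⟨hu0, hcos⟩ := cos_aux u (t • w) (2*δ) (1/2) (by norm_num) hsn hus.le (by linarith)
    have hconv' : ⟪u, t • w⟫ / (‖u‖ * ‖t • w‖) = ⟪u, w⟫ / (‖u‖ * ‖w‖) := by
      rw [real_inner_smul_right, norm_smul, Real.norm_eq_abs, abs_of_pos htpos]
      rw [mul_comm ‖u‖ (t * ‖w‖), mul_assoc, mul_div_mul_left _ _ (ne_of_gt htpos), mul_comm ‖w‖ ‖u‖]
    rw [hconv'] at hcos
    refine Or.inl ⟨hw0, u, huU, hu0, le_trans ?_ hcos⟩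
    nlinarith
end

section
/- Let U, V be closed linear subspaces of a real Hilbert space X such that U ∩ V = {0} and U + V is closed, and let M ∈ (0,1). Then there exist ε ∈ (0, M) and η ∈ (0,1) such that for each x ∈ U(ε) \ MB_X, y ∈ V(ε) \ MB_X, and z ∈ εB_X, one has ⟨x − z, y − z⟩ ≤ η‖x − z‖‖y − z‖, where W(ε) = {w ∈ X \ {0} : ∃ u ∈ W \ {0} with cos(u,w) ≥ 1 − ε} ∪ εB_X for a subspace W. -/
open Filter Metric Topology
open scoped RealInnerProductSpace

/-!
The hypotheses on `U` and `V` make `(u, v) ↦ u + v` an isomorphism of Banach spaces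
`U × V ≃ U + V` (open mapping theorem), so the unit sphere of `U` keeps a distance `δ > 0`
from `V`. A point of `W(ε)` outside `M B_X` has direction within `√(2ε)` of a unit vector of
`W`, and shifting it by `z ∈ ε B_X` turns its direction by at most `2ε / M`. For `ε` small the
directions of `x - z` and `y - z` are therefore at distance at least `δ / 2`, i.e. their cosine
is at most `1 - δ² / 8`.
-/

namespace Submodule

variable {E : Type*} [NormedAddCommGroup E] [NormedSpace ℝ E] [CompleteSpace E]
  {U V : Submodule ℝ E}

theorem antilipschitz_coprod_subtypeL (hU : IsClosed (U : Set E)) (hV : IsClosed (V : Set E))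
    (hUV : U ⊓ V = ⊥) (hsum : IsClosed ((U ⊔ V : Submodule ℝ E) : Set E)) :
    ∃ K, AntilipschitzWith K (U.subtypeL.coprod V.subtypeL) := by
  have := hU.completeSpace_coe
  have := hV.completeSpace_coe
  refine ContinuousLinearMap.antilipschitz_of_injective_of_isClosed_range _ ?_ ?_
  · refine LinearMap.ker_eq_bot.mp ?_
    rw [ContinuousLinearMap.ker_coprod_of_disjoint_range] <;> simp [disjoint_iff, hUV]
  · rw [← ContinuousLinearMap.coe_coe, ← LinearMap.coe_range, ContinuousLinearMap.range_coprod]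
    simpa using hsum

theorem exists_le_norm_sub_of_isClosed_sup (hU : IsClosed (U : Set E)) (hV : IsClosed (V : Set E))
    (hUV : U ⊓ V = ⊥) (hsum : IsClosed ((U ⊔ V : Submodule ℝ E) : Set E)) :
    ∃ δ ∈ Set.Ioc (0 : ℝ) 1, ∀ u ∈ U, ‖u‖ = 1 → ∀ v ∈ V, δ ≤ ‖u - v‖ := by
  obtain ⟨K, hK⟩ := antilipschitz_coprod_subtypeL hU hV hUV hsum
  refine ⟨1 / (K + 1), ⟨by positivity, ?_⟩, fun u hu hu1 v hv => ?_⟩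
  · rw [div_le_one (by positivity)]; simp
  let p : U × V := (⟨u, hu⟩, -⟨v, hv⟩)
  have hbound : ‖p‖ ≤ K * ‖u - v‖ := by
    simpa [p, sub_eq_add_neg] using
      (U.subtypeL.coprod V.subtypeL).bound_of_antilipschitz hK p
  have hp1 : 1 ≤ ‖p‖ := hu1 ▸ norm_fst_le p
  rw [div_le_iff₀ (by positivity)]
  nlinarith [norm_nonneg (u - v)]

end Submodule

section Normalize

variable {E : Type*} [NormedAddCommGroup E] [NormedSpace ℝ E]

theorem norm_inv_norm_smul_self {a : E} (ha : a ≠ 0) : ‖‖a‖⁻¹ • a‖ = 1 := by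
  rw [norm_smul, norm_inv, norm_norm, inv_mul_cancel₀ (norm_ne_zero_iff.mpr ha)]

theorem norm_inv_norm_smul_sub_inv_norm_smul_le {a b : E} (ha : a ≠ 0) (hb : b ≠ 0) :
    ‖‖a‖⁻¹ • a - ‖b‖⁻¹ • b‖ ≤ 2 * ‖a - b‖ / ‖a‖ := by
  have ha0 : 0 < ‖a‖ := norm_pos_iff.mpr ha
  have hb0 : 0 < ‖b‖ := norm_pos_iff.mpr hb
  have hsplit : ‖a‖⁻¹ • a - ‖b‖⁻¹ • b = ‖a‖⁻¹ • (a - b) + (‖a‖⁻¹ - ‖b‖⁻¹) • b := by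
    rw [smul_sub, sub_smul]; abel
  have hscale : ‖(‖a‖⁻¹ - ‖b‖⁻¹) • b‖ = |‖b‖ - ‖a‖| / ‖a‖ := by
    rw [norm_smul, Real.norm_eq_abs, inv_sub_inv ha0.ne' hb0.ne', abs_div,
      abs_of_pos (mul_pos ha0 hb0)]
    field_simp
  calc ‖‖a‖⁻¹ • a - ‖b‖⁻¹ • b‖
      ≤ ‖‖a‖⁻¹ • (a - b)‖ + ‖(‖a‖⁻¹ - ‖b‖⁻¹) • b‖ := hsplit ▸ norm_add_le _ _
    _ = ‖a - b‖ / ‖a‖ + |‖b‖ - ‖a‖| / ‖a‖ := by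
        rw [hscale, norm_smul, norm_inv, norm_norm, inv_mul_eq_div]
    _ ≤ ‖a - b‖ / ‖a‖ + ‖a - b‖ / ‖a‖ := by
        gcongr
        rw [norm_sub_rev]
        exact abs_norm_sub_norm_le b a
    _ = 2 * ‖a - b‖ / ‖a‖ := by ring

end Normalize

section InnerProduct

variable {X : Type*} [NormedAddCommGroup X] [InnerProductSpace ℝ X]

theorem real_inner_le_one_sub_of_le_norm_sub {a b : X} (ha : ‖a‖ = 1) (hb : ‖b‖ = 1) {r : ℝ}
    (hr : 0 ≤ r) (h : r ≤ ‖a - b‖) : ⟪a, b⟫ ≤ 1 - r ^ 2 / 2 := by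
  have hsq := norm_sub_sq_real a b
  rw [ha, hb] at hsq
  nlinarith

theorem real_inner_le_of_inv_norm_smul_near {p q u v : X} {δ : ℝ} (hp : p ≠ 0) (hq : q ≠ 0)
    (huv : δ ≤ ‖u - v‖) (hpu : ‖‖p‖⁻¹ • p - u‖ ≤ δ / 4) (hqv : ‖‖q‖⁻¹ • q - v‖ ≤ δ / 4) :
    ⟪p, q⟫ ≤ (1 - δ ^ 2 / 8) * (‖p‖ * ‖q‖) := by
  have hdist : δ / 2 ≤ ‖‖p‖⁻¹ • p - ‖q‖⁻¹ • q‖ := by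
    have h1 := norm_sub_le_norm_sub_add_norm_sub u (‖p‖⁻¹ • p) v
    have h2 := norm_sub_le_norm_sub_add_norm_sub (‖p‖⁻¹ • p) (‖q‖⁻¹ • q) v
    rw [norm_sub_rev u (‖p‖⁻¹ • p)] at h1
    linarith
  have hunit := real_inner_le_one_sub_of_le_norm_sub (norm_inv_norm_smul_self hp)
    (norm_inv_norm_smul_self hq) (by linarith [norm_nonneg (‖p‖⁻¹ • p - u)]) hdist
  rw [real_inner_smul_left, real_inner_smul_right, ← mul_assoc, ← mul_inv,
    inv_mul_le_iff₀ (by positivity)] at hunit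
  linarith

theorem exists_sq_norm_sub_le_of_mem_coneNbhd {W : Set X} {ε : ℝ} {x : X}
    (hx : x ∈ coneNbhd W ε) (hεx : ε < ‖x‖) :
    ∃ u ∈ W, u ≠ 0 ∧ ‖‖x‖⁻¹ • x - ‖u‖⁻¹ • u‖ ^ 2 ≤ 2 * ε := by
  rcases hx with ⟨hx0, u, hu, hu0, hcos⟩ | hball
  · refine ⟨u, hu, hu0, ?_⟩
    have hcos' : ⟪‖x‖⁻¹ • x, ‖u‖⁻¹ • u⟫ = ⟪u, x⟫ / (‖u‖ * ‖x‖) := by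
      rw [real_inner_smul_left, real_inner_smul_right, real_inner_comm, div_eq_inv_mul, mul_inv]
      ring
    rw [norm_sub_sq_real, norm_inv_norm_smul_self hx0, norm_inv_norm_smul_self hu0, hcos']
    linarith
  · rw [mem_closedBall, dist_zero_right] at hball
    linarith

theorem exists_norm_sub_le_of_mem_coneNbhd {W : Set X} {ε M : ℝ} {x z : X}
    (hx : x ∈ coneNbhd W ε) (hxM : M < ‖x‖) (hεM : ε < M) (hz : ‖z‖ ≤ ε) :
    x - z ≠ 0 ∧ ∃ u ∈ W, u ≠ 0 ∧ ‖‖x - z‖⁻¹ • (x - z) - ‖u‖⁻¹ • u‖ ≤ √(2 * ε) + 2 * ε / M := by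
  have hε : 0 ≤ ε := (norm_nonneg z).trans hz
  have hx0 : x ≠ 0 := norm_pos_iff.mp (by linarith)
  have hxz : x - z ≠ 0 := by
    rw [← norm_pos_iff]
    linarith [norm_sub_norm_le x z]
  obtain ⟨u, hu, hu0, hxu⟩ := exists_sq_norm_sub_le_of_mem_coneNbhd hx (by linarith)
  refine ⟨hxz, u, hu, hu0, ?_⟩
  have hshift : ‖‖x - z‖⁻¹ • (x - z) - ‖x‖⁻¹ • x‖ ≤ 2 * ε / M := by
    rw [norm_sub_rev]
    refine (norm_inv_norm_smul_sub_inv_norm_smul_le hx0 hxz).trans ?_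
    rw [sub_sub_cancel]
    gcongr
    linarith
  calc ‖‖x - z‖⁻¹ • (x - z) - ‖u‖⁻¹ • u‖
      ≤ ‖‖x - z‖⁻¹ • (x - z) - ‖x‖⁻¹ • x‖ + ‖‖x‖⁻¹ • x - ‖u‖⁻¹ • u‖ :=
        norm_sub_le_norm_sub_add_norm_sub _ _ _
    _ ≤ 2 * ε / M + √(2 * ε) := add_le_add hshift (Real.le_sqrt_of_sq_le hxu)
    _ = √(2 * ε) + 2 * ε / M := add_comm _ _

end InnerProduct

theorem stmt14 {X : Type*} [NormedAddCommGroup X] [InnerProductSpace ℝ X] [CompleteSpace X]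
    (U V : Submodule ℝ X) (hUc : IsClosed (U : Set X)) (hVc : IsClosed (V : Set X))
    (hUV : U ⊓ V = ⊥) (hsum : IsClosed ((U ⊔ V : Submodule ℝ X) : Set X))
    (M : ℝ) (hM : M ∈ Set.Ioo (0 : ℝ) 1) :
    ∃ ε ∈ Set.Ioo (0 : ℝ) M, ∃ η ∈ Set.Ioo (0 : ℝ) 1,
      ∀ x ∈ coneNbhd (U : Set X) ε, M < ‖x‖ →
        ∀ y ∈ coneNbhd (V : Set X) ε, M < ‖y‖ →
          ∀ z ∈ Metric.closedBall (0 : X) ε,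
            ⟪x - z, y - z⟫ ≤ η * (‖x - z‖ * ‖y - z‖) := by
  obtain ⟨hM0, hM1⟩ := hM
  obtain ⟨δ, ⟨hδ0, hδ1⟩, hδ⟩ := Submodule.exists_le_norm_sub_of_isClosed_sup hUc hVc hUV hsum
  -- `ε := δ² M / 128` makes both `√(2ε)` and `2ε / M` at most `δ / 8`.
  have hδsq : δ ^ 2 ≤ δ := by nlinarith
  have hεM : δ ^ 2 * M / 128 < M := by nlinarith [mul_le_mul_of_nonneg_right hδsq hM0.le]
  have hr : √(2 * (δ ^ 2 * M / 128)) + 2 * (δ ^ 2 * M / 128) / M ≤ δ / 4 := by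
    have hsqrt : √(2 * (δ ^ 2 * M / 128)) ≤ δ / 8 := by
      rw [Real.sqrt_le_left (by positivity)]
      nlinarith
    have hlin : 2 * (δ ^ 2 * M / 128) / M ≤ δ / 8 := by
      rw [div_le_iff₀ hM0]
      nlinarith [mul_le_mul_of_nonneg_right hδsq hM0.le]
    linarith
  refine ⟨δ ^ 2 * M / 128, ⟨by positivity, hεM⟩, 1 - δ ^ 2 / 8, ⟨by nlinarith, by nlinarith⟩, ?_⟩
  intro x hx hxM y hy hyM z hz
  rw [mem_closedBall, dist_zero_right] at hz
  obtain ⟨hxz, u, hu, hu0, hxu⟩ := exists_norm_sub_le_of_mem_coneNbhd hx hxM hεM hz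
  obtain ⟨hyz, v, hv, -, hyv⟩ := exists_norm_sub_le_of_mem_coneNbhd hy hyM hεM hz
  exact real_inner_le_of_inv_norm_smul_near hxz hyz
    (hδ _ (U.smul_mem _ hu) (norm_inv_norm_smul_self hu0) _ (V.smul_mem _ hv))
    (hxu.trans hr) (hyv.trans hr)
end

section
/- Let X be a real Hilbert space and A, B nonempty closed convex subsets of X with A ∩ B ≠ ∅. Let {A_n}, {B_n} be sequences of nonempty closed convex subsets of X Attouch-Wets converging to A and B respectively, a₀ ∈ X, and let {a_n}, {b_n} be the corresponding perturbed alternating projections sequences. If {a_n} and {b_n} both converge in norm, then there exists c ∈ A ∩ B such that a_n → c and b_n → c in norm. -/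
/-!
Passing to the limit in `bₙ = P_{Bₙ}(aₙ₋₁)` and `aₙ = P_{Aₙ}(bₙ)`, Attouch–Wets convergence makes the
limits mutual nearest points: `lb = P_B(la)` and `la = P_A(lb)`. For `z ∈ A ∩ B` the two variational
inequalities `⟪la - lb, z - lb⟫ ≤ 0` and `⟪lb - la, z - la⟫ ≤ 0` add up to `‖la - lb‖² ≤ 0`.
-/

open Filter Metric Topology

/-- `a`, `b` are the perturbed alternating projections sequences w.r.t. `A`, `B`
with starting point `a₀`: `bₙ = P_{Bₙ}(a_{n−1})` and `aₙ = P_{Aₙ}(bₙ)` for `n ≥ 1`. -/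
def IsPerturbedAPS {X : Type*} [NormedAddCommGroup X]
    (A B : ℕ → Set X) (a₀ : X) (a b : ℕ → X) : Prop :=
  a 0 = a₀ ∧ ∀ n : ℕ,
    IsProjOn (B (n + 1)) (a n) (b (n + 1)) ∧ IsProjOn (A (n + 1)) (b (n + 1)) (a (n + 1))

open scoped RealInnerProductSpace

section AttouchWets

variable {X : Type*} [NormedAddCommGroup X] {C : ℕ → Set X} {L : Set X}

lemma AWTendsto.comp_tendsto (hC : AWTendsto C L) {φ : ℕ → ℕ} (hφ : Tendsto φ atTop atTop) :
    AWTendsto (fun n => C (φ n)) L := by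
  intro N ε hε
  obtain ⟨n₀, h₀⟩ := hC N ε hε
  obtain ⟨m, hm⟩ := eventually_atTop.mp (tendsto_atTop.mp hφ n₀)
  exact ⟨m, fun n hn => h₀ (φ n) (hm n hn)⟩

lemma AWTendsto.tendsto_infDist (hC : AWTendsto C L) {u : ℕ → X} {l : X}
    (hu : Tendsto u atTop (𝓝 l)) :
    Tendsto (fun n => infDist (u n) (C n)) atTop (𝓝 (infDist l L)) := by
  have hgap : Tendsto (fun n => infDist (u n) (C n) - infDist (u n) L) atTop (𝓝 0) := by
    rw [Metric.tendsto_nhds]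
    intro ε hε
    have hbdd : ∀ᶠ n in atTop, ‖u n‖ ≤ (⌈‖l‖ + 1⌉₊ : ℕ) :=
      (hu.norm.eventually (gt_mem_nhds (lt_add_one ‖l‖))).mono fun n hn =>
        hn.le.trans (Nat.le_ceil _)
    obtain ⟨n₀, h₀⟩ := hC ⌈‖l‖ + 1⌉₊ ε hε
    filter_upwards [hbdd, eventually_ge_atTop n₀] with n hn hn₀
    simpa only [Real.dist_eq, sub_zero] using h₀ n hn₀ (u n) hn
  simpa only [Function.comp_apply, sub_add_cancel, zero_add] using
    hgap.add (((continuous_infDist_pt L).tendsto l).comp hu)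

end AttouchWets

section Projection

variable {X : Type*} [NormedAddCommGroup X] {K : Set X} {x p : X}

lemma IsProjOn.dist_eq_infDist (h : IsProjOn K x p) : dist x p = infDist x K :=
  le_antisymm ((le_infDist ⟨p, h.1⟩).2 h.2) (infDist_le_dist_of_mem h.1)

lemma isProjOn_of_tendsto {C : ℕ → Set X} {L : Set X} (hC : AWTendsto C L) (hL : IsClosed L)
    (hLne : L.Nonempty) {u v : ℕ → X} {q : X} (hu : Tendsto u atTop (𝓝 p))
    (hv : Tendsto v atTop (𝓝 q)) (h : ∀ n, IsProjOn (C n) (u n) (v n)) : IsProjOn L p q := by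
  have hqL : q ∈ L := by
    rw [← hL.closure_eq, mem_closure_iff_infDist_zero hLne]
    refine tendsto_nhds_unique (hC.tendsto_infDist hv) ?_
    simp only [fun n => infDist_zero_of_mem (h n).1, tendsto_const_nhds]
  have hdist : dist p q = infDist p L :=
    tendsto_nhds_unique (hu.dist hv)
      ((hC.tendsto_infDist hu).congr fun n => (h n).dist_eq_infDist.symm)
  exact ⟨hqL, fun y hy => hdist ▸ infDist_le_dist_of_mem hy⟩

variable [InnerProductSpace ℝ X]

lemma IsProjOn.inner_sub_nonpos (hK : Convex ℝ K) (h : IsProjOn K x p) :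
    ∀ y ∈ K, ⟪x - p, y - p⟫ ≤ 0 := by
  refine (norm_eq_iInf_iff_real_inner_le_zero hK h.1).1 ?_
  simpa only [← dist_eq_norm, ← infDist_eq_iInf] using h.dist_eq_infDist

lemma eq_of_isProjOn_of_isProjOn {A B : Set X} (hA : Convex ℝ A) (hB : Convex ℝ B)
    (hAB : (A ∩ B).Nonempty) {q : X} (hq : IsProjOn B p q) (hp : IsProjOn A q p) : p = q := by
  obtain ⟨z, hzA, hzB⟩ := hAB
  have hB' := hq.inner_sub_nonpos hB z hzB
  have hA' := hp.inner_sub_nonpos hA z hzA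
  have hsum : ⟪p - q, p - q⟫ = ⟪p - q, z - q⟫ + ⟪q - p, z - p⟫ := by
    rw [← neg_sub p q, inner_neg_left, ← sub_eq_add_neg, ← inner_sub_right,
      sub_sub_sub_cancel_left]
  exact sub_eq_zero.1 (real_inner_self_nonpos.1 (by linarith))

end Projection

theorem stmt16_general {X : Type*} [NormedAddCommGroup X] [InnerProductSpace ℝ X]
    (A B : Set X) (hAc : IsClosed A) (hAv : Convex ℝ A)
    (hBc : IsClosed B) (hBv : Convex ℝ B)
    (hAB : (A ∩ B).Nonempty)
    (An Bn : ℕ → Set X)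
    (hAW : AWTendsto An A) (hBW : AWTendsto Bn B)
    (a₀ : X) (a b : ℕ → X) (hab : IsPerturbedAPS An Bn a₀ a b)
    (la lb : X) (hla : Filter.Tendsto a Filter.atTop (nhds la))
    (hlb : Filter.Tendsto b Filter.atTop (nhds lb)) :
    ∃ c ∈ A ∩ B, Filter.Tendsto a Filter.atTop (nhds c) ∧
      Filter.Tendsto b Filter.atTop (nhds c) := by
  obtain ⟨-, hstep⟩ := hab
  have hsucc := tendsto_add_atTop_nat 1
  have hPB : IsProjOn B la lb :=
    isProjOn_of_tendsto (hBW.comp_tendsto hsucc) hBc (hAB.mono Set.inter_subset_right) hla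
      (hlb.comp hsucc) fun n => (hstep n).1
  have hPA : IsProjOn A lb la :=
    isProjOn_of_tendsto (hAW.comp_tendsto hsucc) hAc (hAB.mono Set.inter_subset_left)
      (hlb.comp hsucc) (hla.comp hsucc) fun n => (hstep n).2
  have heq : la = lb := eq_of_isProjOn_of_isProjOn hAv hBv hAB hPB hPA
  exact ⟨la, ⟨hPA.1, heq ▸ hPB.1⟩, hla, heq ▸ hlb⟩

theorem stmt16 {X : Type*} [NormedAddCommGroup X] [InnerProductSpace ℝ X] [CompleteSpace X]
    (A B : Set X) (hAne : A.Nonempty) (hAc : IsClosed A) (hAv : Convex ℝ A)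
    (hBne : B.Nonempty) (hBc : IsClosed B) (hBv : Convex ℝ B)
    (hAB : (A ∩ B).Nonempty)
    (An Bn : ℕ → Set X)
    (hAn : ∀ n, (An n).Nonempty ∧ IsClosed (An n) ∧ Convex ℝ (An n))
    (hBn : ∀ n, (Bn n).Nonempty ∧ IsClosed (Bn n) ∧ Convex ℝ (Bn n))
    (hAW : AWTendsto An A) (hBW : AWTendsto Bn B)
    (a₀ : X) (a b : ℕ → X) (hab : IsPerturbedAPS An Bn a₀ a b)
    (la lb : X) (hla : Filter.Tendsto a Filter.atTop (nhds la))
    (hlb : Filter.Tendsto b Filter.atTop (nhds lb)) :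
    ∃ c ∈ A ∩ B, Filter.Tendsto a Filter.atTop (nhds c) ∧
      Filter.Tendsto b Filter.atTop (nhds c) :=
  stmt16_general A B hAc hAv hBc hBv hAB An Bn hAW hBW a₀ a b hab la lb hla hlb
end

section
/- Let K be a closed convex cone with nonempty interior in a real Hilbert space X, let a₁, …, a_n ∈ X and b₁, …, b_n > 0, and let B = {x ∈ X : ⟨a_i, x⟩ ≤ b_i for i = 1, …, n}. Then the couple (K, B) is stable. -/
open Filter Metric Topology

def StablePair {X : Type*} [NormedAddCommGroup X] [NormedSpace ℝ X] (A B : Set X) : Prop :=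
  ∀ An Bn : ℕ → Set X,
    (∀ n, (An n).Nonempty ∧ IsClosed (An n) ∧ Convex ℝ (An n)) →
    (∀ n, (Bn n).Nonempty ∧ IsClosed (Bn n) ∧ Convex ℝ (Bn n)) →
    AWTendsto An A → AWTendsto Bn B →
    ∀ a₀ : X, ∀ a b : ℕ → X, IsPerturbedAPS An Bn a₀ a b →
      (∃ la : X, Filter.Tendsto a Filter.atTop (nhds la)) ∧
      (∃ lb : X, Filter.Tendsto b Filter.atTop (nhds lb))

open scoped RealInnerProductSpace

section Aux
variable {X : Type*} [NormedAddCommGroup X] [InnerProductSpace ℝ X]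

lemma isProjOn_inner_le {K : Set X} {x p : X} (hKv : Convex ℝ K)
    (hp : IsProjOn K x p) {c : X} (hc : c ∈ K) : ⟪x - p, c - p⟫ ≤ 0 := by
  have hnorm : ‖x - p‖ = ⨅ w : K, ‖x - w‖ := by
    have : Nonempty K := ⟨⟨p, hp.1⟩⟩
    refine le_antisymm (le_ciInf fun w => ?_) ?_
    · simpa [dist_eq_norm] using hp.2 w w.2
    · exact ciInf_le ⟨0, by rintro z ⟨w, rfl⟩; positivity⟩ (⟨p, hp.1⟩ : K)
  exact (norm_eq_iInf_iff_real_inner_le_zero hKv hp.1).mp hnorm c hc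

lemma isProjOn_norm_le {K : Set X} {x p : X} (hKv : Convex ℝ K)
    (hp : IsProjOn K x p) {c : X} (hc : c ∈ K) : ‖p - c‖ ≤ ‖x - c‖ := by
  have h1 := isProjOn_inner_le hKv hp hc
  have h2 : ‖x - c‖ ^ 2 = ‖x - p‖ ^ 2 + 2 * ⟪x - p, p - c⟫ + ‖p - c‖ ^ 2 := by
    have hxc : x - c = (x - p) + (p - c) := by abel
    rw [hxc, norm_add_sq_real]
  have h3 : ⟪x - p, p - c⟫ = - ⟪x - p, c - p⟫ := by
    rw [← inner_neg_right]; congr 1; abel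
  nlinarith [norm_nonneg (x - p), norm_nonneg (p - c), norm_nonneg (x - c)]

lemma absorb {C : Set X} (hCne : C.Nonempty) (hCc : IsClosed C) (hCv : Convex ℝ C)
    [CompleteSpace X] {u z : X} {R ε : ℝ} (hε : 0 < ε)
    (h : ∀ y : X, ‖y - u‖ ≤ R → infDist y C < ε)
    (hz : ‖z - u‖ + ε ≤ R) : z ∈ C := by
  by_contra hzC
  obtain ⟨p, hpC, hpmin⟩ := exists_norm_eq_iInf_of_complete_convex hCne hCc.isComplete hCv z
  have hvar := (norm_eq_iInf_iff_real_inner_le_zero hCv hpC).mp hpmin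
  have hδ : 0 < ‖z - p‖ := by
    rw [norm_pos_iff, sub_ne_zero]
    rintro rfl; exact hzC hpC
  set δ : ℝ := ‖z - p‖ with hδdef
  set w : X := δ⁻¹ • (z - p) with hwdef
  have hw : ‖w‖ = 1 := by
    rw [hwdef, norm_smul, norm_inv, norm_norm, ← hδdef, inv_mul_cancel₀ hδ.ne']
  set t : ℝ := R - ‖z - u‖ with htdef
  have ht : ε ≤ t := by simp only [htdef]; linarith
  set y : X := z + t • w with hydef
  have hyu : ‖y - u‖ ≤ R := by
    have hyu0 : y - u = (z - u) + t • w := by rw [hydef]; abel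
    calc ‖y - u‖ ≤ ‖z - u‖ + ‖t • w‖ := by rw [hyu0]; exact norm_add_le _ _
    _ = ‖z - u‖ + |t| * 1 := by rw [norm_smul, hw, Real.norm_eq_abs]
    _ = R := by rw [abs_of_nonneg (by linarith : (0:ℝ) ≤ t)]; simp [htdef]
  have hlt := h y hyu
  obtain ⟨q, hqC, hqlt⟩ := (infDist_lt_iff hCne).mp hlt
  have hip : ⟪w, y - q⟫ = δ + t - δ⁻¹ * ⟪z - p, q - p⟫ := by
    have hyq : y - q = (z - p) + t • w + (p - q) := by rw [hydef]; abel
    have hpq : (⟪z - p, p - q⟫ : ℝ) = - ⟪z - p, q - p⟫ := by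
      rw [← inner_neg_right]; congr 1; abel
    simp only [hyq, inner_add_right, hwdef, real_inner_smul_left, real_inner_smul_right,
      real_inner_self_eq_norm_sq, hpq]
    rw [← hδdef]
    simp only [← hwdef, hw, one_pow, mul_one]
    field_simp
    ring
  have hge : ε ≤ dist y q := by
    have h1 : ⟪w, y - q⟫ ≤ ‖w‖ * ‖y - q‖ := real_inner_le_norm _ _
    have h2 : 0 ≤ -⟪z - p, q - p⟫ := by linarith [hvar q hqC]
    have h3 : 0 ≤ δ⁻¹ := by positivity
    have h4 : 0 ≤ δ⁻¹ * (-⟪z - p, q - p⟫) := mul_nonneg h3 h2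
    rw [dist_eq_norm]
    rw [hw, one_mul] at h1
    nlinarith
  linarith [hqlt, hge]

lemma fejer_cauchy (x : ℕ → X) (c : X) (s : ℝ) (hs : 0 < s)
    (h : ∀ c' : X, ‖c' - c‖ ≤ s → ∀ k, ‖x (k + 1) - c'‖ ≤ ‖x k - c'‖) :
    CauchySeq x := by
  have hant : ∀ c' : X, ‖c' - c‖ ≤ s → Antitone fun k => ‖x k - c'‖ := fun c' hc' =>
    antitone_nat_of_succ_le (h c' hc')
  set r : ℕ → ℝ := fun k => ‖x k - c‖ with hrdef
  have hr : Antitone r := hant c (by simp [hs.le])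
  have hr2 : Antitone fun k => r k ^ 2 := fun i j hij =>
    pow_le_pow_left₀ (norm_nonneg _) (hr hij) 2
  have key : ∀ n m : ℕ, n ≤ m → 2 * s * ‖x n - x m‖ ≤ r n ^ 2 - r m ^ 2 := by
    intro n m hnm
    rcases eq_or_ne (x n) (x m) with heq | hne
    · rw [heq, sub_self, norm_zero, mul_zero]
      have := hr2 hnm
      simpa using sub_nonneg.mpr this
    · set d : X := x n - x m with hddef
      have hd : 0 < ‖d‖ := by rw [norm_pos_iff, hddef, sub_ne_zero]; exact hne
      set v : X := (s / ‖d‖) • d with hvdef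
      have hv : ‖v‖ = s := by
        rw [hvdef, norm_smul, Real.norm_eq_abs, abs_of_pos (by positivity),
          div_mul_cancel₀ _ hd.ne']
      have hmono := hant (c + v) (by simpa using hv.le)
      have hle : ‖x m - (c + v)‖ ≤ ‖x n - (c + v)‖ := hmono hnm
      have hexp : ∀ k, ‖x k - (c + v)‖ ^ 2 = ‖x k - c‖ ^ 2 - 2 * ⟪x k - c, v⟫ + ‖v‖ ^ 2 := by
        intro k
        have : x k - (c + v) = (x k - c) - v := by abel
        rw [this, norm_sub_sq_real]
      have hsq : ‖x m - (c + v)‖ ^ 2 ≤ ‖x n - (c + v)‖ ^ 2 :=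
        pow_le_pow_left₀ (norm_nonneg _) hle 2
      rw [hexp, hexp] at hsq
      have hinner : ⟪x n - c, v⟫ - ⟪x m - c, v⟫ = s * ‖d‖ := by
        have hsubd : (x n - c) - (x m - c) = d := by rw [hddef]; abel
        have h1 : ⟪x n - c, v⟫ - ⟪x m - c, v⟫ = ⟪d, v⟫ := by
          rw [← inner_sub_left, hsubd]
        rw [h1, hvdef, real_inner_smul_right, real_inner_self_eq_norm_sq]
        field_simp
      have hkey2 : 2 * (⟪x n - c, v⟫ - ⟪x m - c, v⟫) ≤ r n ^ 2 - r m ^ 2 := by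
        simp only [hrdef]; linarith
      rw [hinner] at hkey2
      calc 2 * s * ‖x n - x m‖ = 2 * (s * ‖d‖) := by rw [hddef]; ring
      _ ≤ r n ^ 2 - r m ^ 2 := hkey2
  have hbdd : BddBelow (Set.range fun k => r k ^ 2) := ⟨0, by rintro z ⟨k, rfl⟩; positivity⟩
  set L : ℝ := ⨅ k, r k ^ 2 with hLdef
  have htend : Tendsto (fun k => r k ^ 2) atTop (nhds L) := tendsto_atTop_ciInf hr2 hbdd
  have hLle : ∀ k, L ≤ r k ^ 2 := fun k => ciInf_le hbdd k
  apply cauchySeq_of_le_tendsto_0 (fun N => (r N ^ 2 - L) / (2 * s))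
  · intro p q N hNp hNq
    have hmain : ∀ i j : ℕ, N ≤ i → i ≤ j → dist (x i) (x j) ≤ (r N ^ 2 - L) / (2 * s) := by
      intro i j hNi hij
      have h1 := key i j hij
      have h2 : r i ^ 2 ≤ r N ^ 2 := hr2 hNi
      have h3 := hLle j
      rw [dist_eq_norm, le_div_iff₀ (by positivity : (0:ℝ) < 2 * s)]
      nlinarith
    rcases le_total p q with hpq | hqp
    · exact hmain p q hNp hpq
    · rw [dist_comm]; exact hmain q p hNq hqp
  · have htz : Tendsto (fun N => (r N ^ 2 - L) / (2 * s)) atTop (nhds ((L - L) / (2 * s))) :=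
      (htend.sub tendsto_const_nhds).div_const _
    simpa using htz

lemma exists_pos_mul_le {n : ℕ} (c : Fin n → ℝ) (b : Fin n → ℝ) (hb : ∀ i, 0 < b i) :
    ∃ t : ℝ, 0 < t ∧ ∀ i, t * c i ≤ b i := by
  rcases isEmpty_or_nonempty (Fin n) with hemp | hne
  · exact ⟨1, one_pos, fun i => hemp.elim i⟩
  · set f : Fin n → ℝ := fun i => b i / (|c i| + 1) with hf
    refine ⟨Finset.univ.inf' Finset.univ_nonempty f, ?_, ?_⟩
    · rw [Finset.lt_inf'_iff]
      exact fun i _ => div_pos (hb i) (by positivity)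
    · intro i
      have h1 : Finset.univ.inf' Finset.univ_nonempty f ≤ f i :=
        Finset.inf'_le f (Finset.mem_univ i)
      have h2 : (0:ℝ) < |c i| + 1 := by positivity
      have h3 : f i * (|c i| + 1) = b i := div_mul_cancel₀ _ h2.ne'
      have h4 : 0 < Finset.univ.inf' Finset.univ_nonempty f := by
        rw [Finset.lt_inf'_iff]
        exact fun i _ => div_pos (hb i) (by positivity)
      nlinarith [le_abs_self (c i), abs_nonneg (c i),
        mul_le_mul_of_nonneg_right h1 (abs_nonneg (c i))]

end Aux

theorem stmt18 {X : Type*} [NormedAddCommGroup X] [InnerProductSpace ℝ X] [CompleteSpace X]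
    (K : Set X) (hKc : IsClosed K) (hKv : Convex ℝ K)
    (hKcone : ∀ lam : ℝ, 0 ≤ lam → ∀ k ∈ K, lam • k ∈ K)
    (hKint : (interior K).Nonempty)
    (n : ℕ) (a : Fin n → X) (b : Fin n → ℝ) (hb : ∀ i, 0 < b i) :
    StablePair K {x : X | ∀ i, ⟪a i, x⟫ ≤ b i} := by
  intro An Bn hAn hBn hAW_A hAW_B a₀ av bv haps
  set B : Set X := {x : X | ∀ i, ⟪a i, x⟫ ≤ b i} with hBdef
  obtain ⟨x0, hx0⟩ := hKint
  obtain ⟨r, hr0, hballK⟩ := Metric.mem_nhds_iff.mp (mem_interior_iff_mem_nhds.mp hx0)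
  obtain ⟨t, ht0, ht⟩ := exists_pos_mul_le (fun i => |⟪a i, x0⟫| + ‖a i‖ * r) b hb
  set u' : X := t • x0 with hu'
  set ρ : ℝ := t * r / 2 with hρdef
  have hρ : 0 < ρ := by positivity
  have hKball : ∀ y : X, ‖y - u'‖ ≤ ρ → y ∈ K := by
    intro y hy
    have hwmem : t⁻¹ • y ∈ Metric.ball x0 r := by
      rw [Metric.mem_ball, dist_eq_norm]
      have he : t⁻¹ • y - x0 = t⁻¹ • (y - u') := by
        rw [hu', smul_sub, smul_smul, inv_mul_cancel₀ ht0.ne', one_smul]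
      rw [he, norm_smul, Real.norm_eq_abs, abs_of_pos (by positivity)]
      calc t⁻¹ * ‖y - u'‖ ≤ t⁻¹ * ρ := by gcongr
      _ = r / 2 := by rw [hρdef]; field_simp
      _ < r := by linarith
    have hmemK := hballK hwmem
    have hy2 : y = t • (t⁻¹ • y) := by rw [smul_smul, mul_inv_cancel₀ ht0.ne', one_smul]
    rw [hy2]; exact hKcone t ht0.le _ hmemK
  have hBball : ∀ y : X, ‖y - u'‖ ≤ ρ → y ∈ B := by
    intro y hy
    simp only [hBdef, Set.mem_setOf_eq]
    intro i
    have h1 : ⟪a i, y⟫ = ⟪a i, u'⟫ + ⟪a i, y - u'⟫ := by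
      rw [← inner_add_right]; congr 1; abel
    have h2 : ⟪a i, u'⟫ = t * ⟪a i, x0⟫ := real_inner_smul_right _ _ _
    have h3 : ⟪a i, y - u'⟫ ≤ ‖a i‖ * ρ :=
      le_trans (real_inner_le_norm _ _) (mul_le_mul_of_nonneg_left hy (norm_nonneg _))
    have h4 := ht i
    have h5 : t * ⟪a i, x0⟫ ≤ t * |⟪a i, x0⟫| := mul_le_mul_of_nonneg_left (le_abs_self _) ht0.le
    have h6 : ‖a i‖ * ρ ≤ t * (‖a i‖ * r) := by
      rw [hρdef]
      nlinarith [norm_nonneg (a i)]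
    rw [h1, h2]
    nlinarith
  set ε₀ : ℝ := ρ / 4 with hε₀def
  have hε₀ : 0 < ε₀ := by positivity
  set N : ℕ := ⌈‖u'‖ + ρ⌉₊ with hN
  obtain ⟨n₁, hn₁⟩ := hAW_A N ε₀ hε₀
  obtain ⟨n₂, hn₂⟩ := hAW_B N ε₀ hε₀
  set n₀ : ℕ := max n₁ n₂ with hn₀
  have hnorm_le : ∀ y : X, ‖y - u'‖ ≤ ρ → ‖y‖ ≤ (N : ℝ) := by
    intro y hy
    have h0 : ‖y‖ ≤ ‖y - u'‖ + ‖u'‖ := by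
      calc ‖y‖ = ‖(y - u') + u'‖ := by congr 1; abel
      _ ≤ ‖y - u'‖ + ‖u'‖ := norm_add_le _ _
    have h1 : ‖u'‖ + ρ ≤ (N : ℝ) := Nat.le_ceil _
    linarith
  have hsubA : ∀ m, n₀ ≤ m → ∀ z : X, ‖z - u'‖ ≤ 2 * ε₀ → z ∈ An m := by
    intro m hm z hz
    refine absorb (hAn m).1 (hAn m).2.1 (hAn m).2.2 hε₀ (R := ρ) (u := u') (fun y hy => ?_) ?_
    · have hyK := hKball y hy
      have habs := hn₁ m (le_trans (le_max_left _ _) hm) y (hnorm_le y hy)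
      rw [infDist_zero_of_mem hyK, sub_zero] at habs
      calc infDist y (An m) ≤ |infDist y (An m)| := le_abs_self _
      _ < ε₀ := habs
    · simp only [hε₀def] at hz ⊢
      linarith
  have hsubB : ∀ m, n₀ ≤ m → ∀ z : X, ‖z - u'‖ ≤ 2 * ε₀ → z ∈ Bn m := by
    intro m hm z hz
    refine absorb (hBn m).1 (hBn m).2.1 (hBn m).2.2 hε₀ (R := ρ) (u := u') (fun y hy => ?_) ?_
    · have hyB := hBball y hy
      have habs := hn₂ m (le_trans (le_max_right _ _) hm) y (hnorm_le y hy)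
      rw [infDist_zero_of_mem hyB, sub_zero] at habs
      calc infDist y (Bn m) ≤ |infDist y (Bn m)| := le_abs_self _
      _ < ε₀ := habs
    · simp only [hε₀def] at hz ⊢
      linarith
  obtain ⟨ha0, hstep⟩ := haps
  have hAconv : ∀ m, Convex ℝ (An m) := fun m => (hAn m).2.2
  have hBconv : ∀ m, Convex ℝ (Bn m) := fun m => (hBn m).2.2
  have hstepA : ∀ c' : X, ‖c' - u'‖ ≤ 2 * ε₀ → ∀ k, n₀ ≤ k →
      ‖av (k + 1) - c'‖ ≤ ‖av k - c'‖ := by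
    intro c' hc' k hk
    have hc'B : c' ∈ Bn (k + 1) := hsubB (k + 1) (le_trans hk (Nat.le_succ k)) c' hc'
    have hc'A : c' ∈ An (k + 1) := hsubA (k + 1) (le_trans hk (Nat.le_succ k)) c' hc'
    calc ‖av (k + 1) - c'‖ ≤ ‖bv (k + 1) - c'‖ :=
          isProjOn_norm_le (hAconv (k + 1)) (hstep k).2 hc'A
    _ ≤ ‖av k - c'‖ := isProjOn_norm_le (hBconv (k + 1)) (hstep k).1 hc'B
  have hstepB : ∀ c' : X, ‖c' - u'‖ ≤ 2 * ε₀ → ∀ k, n₀ ≤ k →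
      ‖bv (k + 2) - c'‖ ≤ ‖bv (k + 1) - c'‖ := by
    intro c' hc' k hk
    have hc'B : c' ∈ Bn (k + 2) := hsubB (k + 2) (by omega) c' hc'
    have hc'A : c' ∈ An (k + 1) := hsubA (k + 1) (by omega) c' hc'
    calc ‖bv (k + 2) - c'‖ ≤ ‖av (k + 1) - c'‖ :=
          isProjOn_norm_le (hBconv (k + 2)) (hstep (k + 1)).1 hc'B
    _ ≤ ‖bv (k + 1) - c'‖ := isProjOn_norm_le (hAconv (k + 1)) (hstep k).2 hc'A
  constructor
  · have hC : CauchySeq (fun k => av (k + n₀)) := by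
      apply fejer_cauchy _ u' (2 * ε₀) (by positivity)
      intro c' hc' k
      have hh := hstepA c' hc' (k + n₀) (Nat.le_add_left _ _)
      have e1 : k + 1 + n₀ = k + n₀ + 1 := by omega
      rw [e1]; exact hh
    obtain ⟨la, hla⟩ := cauchySeq_tendsto_of_complete hC
    exact ⟨la, (tendsto_add_atTop_iff_nat n₀).mp hla⟩
  · have hC : CauchySeq (fun k => bv (k + (n₀ + 1))) := by
      apply fejer_cauchy _ u' (2 * ε₀) (by positivity)
      intro c' hc' k
      have hh := hstepB c' hc' (k + n₀) (Nat.le_add_left _ _)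
      have e1 : k + 1 + (n₀ + 1) = k + n₀ + 2 := by omega
      have e2 : k + (n₀ + 1) = k + n₀ + 1 := by omega
      rw [e1, e2]; exact hh
    obtain ⟨lb, hlb⟩ := cauchySeq_tendsto_of_complete hC
    exact ⟨lb, (tendsto_add_atTop_iff_nat (n₀ + 1)).mp hlb⟩
end
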